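/- Let p0, p3 ≥ 0 with p0 + p3 > 0, and let κ = (p0−p3)/(p0+p3), α² = p0/(p0+p3), β² = p3/(p0+p3). For every Bloch vector (x,y,z) with x² + y² + z² ≤ 1, the coherent information of the channel Λ0 satisfies S(Λ0(ρ(x,y,z))) − S(Λ0^c(ρ(x,y,z))) = h(½(1 + √(κ²(x²+y²) + z²))) − h(½(1 + √((α²−β²)² + 4α²β² z²))) ≤ 1 − h(p0/(p0+p3)), with equality at (x,y,z) = (0,0,0). Hence max_ρ [S(Λ0(ρ)) − S(Λ0^c(ρ))] = 1 − h(p0/(p0+p3)). -/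

import Mathlib

open Matrix

noncomputable section

/-- Pauli matrix X. -/
def PX : Matrix (Fin 2) (Fin 2) ℂ := !![0, 1; 1, 0]

/-- Pauli matrix Y. -/
def PY : Matrix (Fin 2) (Fin 2) ℂ := !![0, -Complex.I; Complex.I, 0]

/-- Pauli matrix Z. -/
def PZ : Matrix (Fin 2) (Fin 2) ℂ := !![1, 0; 0, -1]

/-- The covariant Pauli channel `Λ(ρ) = p₀ ρ + p₁ (XρX + YρY) + p₃ ZρZ`. -/
def pauliChannel (p0 p1 p3 : ℝ) (ρ : Matrix (Fin 2) (Fin 2) ℂ) : Matrix (Fin 2) (Fin 2) ℂ :=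
  (p0 : ℂ) • ρ + (p1 : ℂ) • (PX * ρ * PX + PY * ρ * PY) + (p3 : ℂ) • (PZ * ρ * PZ)

/-- The qubit state with Bloch vector `(x, y, z)`. -/
def blochState (x y z : ℝ) : Matrix (Fin 2) (Fin 2) ℂ :=
  (1 / 2 : ℂ) • ((1 : Matrix (Fin 2) (Fin 2) ℂ) + (x : ℂ) • PX + (y : ℂ) • PY + (z : ℂ) • PZ)

/-- Von Neumann entropy (base-2) of a Hermitian matrix, via its eigenvalues. -/
def vN {n : ℕ} (A : Matrix (Fin n) (Fin n) ℂ) : ℝ :=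
  if h : A.IsHermitian then -∑ i, h.eigenvalues i * Real.logb 2 (h.eigenvalues i) else 0

/-- Multiset of eigenvalues (with multiplicity) of a Hermitian matrix. -/
def eigs {n : ℕ} (A : Matrix (Fin n) (Fin n) ℂ) : Multiset ℝ :=
  if h : A.IsHermitian then Finset.univ.val.map h.eigenvalues else 0

/-- The binary entropy function `h(t) = -t log₂ t - (1-t) log₂ (1-t)`. -/
def binEnt (t : ℝ) : ℝ := -(t * Real.logb 2 t) - (1 - t) * Real.logb 2 (1 - t)

/-- The dephasing-type channel `Λ₀(ρ) = (p₀ ρ + p₃ ZρZ)/(p₀+p₃)`. -/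
def lam0 (p0 p3 : ℝ) (ρ : Matrix (Fin 2) (Fin 2) ℂ) : Matrix (Fin 2) (Fin 2) ℂ :=
  ((p0 / (p0 + p3) : ℝ) : ℂ) • ρ + ((p3 / (p0 + p3) : ℝ) : ℂ) • (PZ * ρ * PZ)

/-- The complementary channel of `Λ₀`, applied to the Bloch state `ρ(x,y,z)`. -/
def lam0c (p0 p3 z : ℝ) : Matrix (Fin 2) (Fin 2) ℂ :=
  !![((p0 / (p0 + p3) : ℝ) : ℂ), ((Real.sqrt (p0 * p3) / (p0 + p3) * z : ℝ) : ℂ);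
     ((Real.sqrt (p0 * p3) / (p0 + p3) * z : ℝ) : ℂ), ((p3 / (p0 + p3) : ℝ) : ℂ)]

/-!
Both `Λ₀(ρ)` and `Λ₀ᶜ(ρ)` are again qubit states in Bloch form, with Bloch vectors `(κx, κy, z)`
and `(2αβz, 0, α² - β²)`, so each entropy is `φ(|r|²)` with `φ(r) = h((1 + √r) / 2)`.
With `c = κ²`, the coherent information is `φ(c(x² + y²) + z²) - φ(c + (1 - c)z²)`, and as `φ`
is antitone it is at most `φ(u) - φ(c + (1 - c)u)` for `u = z²`. This function of `u` is antitone
on `[0, 1]`: writing `s = √u ≤ w = √(c + (1 - c)u)`, so that `1 - w² = (1 - c)(1 - s²)`, the sign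
of its derivative is that of `(1 - c) artanh w / w - artanh s / s`, which is `≤ 0` because
`(1/s - s) artanh s` is antitone (its derivative is `1/s - (1/s² + 1) artanh s ≤ 0` by
`artanh s ≥ s`). Hence the maximum is attained at `u = 0`, where it is `1 - φ(κ²) = 1 - h(α²)`.
-/

open Real

lemma binEnt_eq_binEntropy_div (t : ℝ) : binEnt t = binEntropy t / log 2 := by
  simp only [binEnt, binEntropy, logb, log_inv]
  ring

lemma binEnt_le_one (t : ℝ) : binEnt t ≤ 1 := by
  rw [binEnt_eq_binEntropy_div, div_le_one (log_pos one_lt_two)]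
  exact binEntropy_le_log_two

lemma binEnt_one_sub (t : ℝ) : binEnt (1 - t) = binEnt t := by
  simp only [binEnt_eq_binEntropy_div, binEntropy_one_sub]

lemma binEnt_antitoneOn : AntitoneOn binEnt (Set.Icc 2⁻¹ 1) := fun a ha b hb hab => by
  simp only [binEnt_eq_binEntropy_div]
  exact div_le_div_of_nonneg_right (binEntropy_strictAntiOn.antitoneOn ha hb hab)
    (log_pos one_lt_two).le

lemma hasDerivAt_binEnt {p : ℝ} (hp₀ : p ≠ 0) (hp₁ : p ≠ 1) :
    HasDerivAt binEnt ((log (1 - p) - log p) / log 2) p := by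
  rw [show binEnt = fun t => binEntropy t / log 2 from funext binEnt_eq_binEntropy_div]
  exact (hasDerivAt_binEntropy hp₀ hp₁).div_const _

lemma artanh_eq_half_log_sub {x : ℝ} (hx : x ∈ Set.Ioo (-1) 1) :
    artanh x = (log (1 + x) - log (1 - x)) / 2 := by
  rw [artanh_eq_half_log (Set.Ioo_subset_Icc_self hx),
    log_div (by linarith [hx.1]) (by linarith [hx.2])]
  ring

lemma hasDerivAt_artanh {x : ℝ} (hx : x ∈ Set.Ioo (-1) 1) : HasDerivAt artanh (1 - x ^ 2)⁻¹ x := by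
  have hp : 1 + x ≠ 0 := by linarith [hx.1]
  have hm : 1 - x ≠ 0 := by linarith [hx.2]
  have hlog : HasDerivAt (fun u => (log (1 + u) - log (1 - u)) / 2)
      ((1 / (1 + x) - -1 / (1 - x)) / 2) x :=
    ((((hasDerivAt_id x).const_add 1).log hp).sub
      (((hasDerivAt_id x).const_sub 1).log hm)).div_const 2
  refine (hlog.congr_of_eventuallyEq ?_).congr_deriv ?_
  · filter_upwards [isOpen_Ioo.mem_nhds hx] with u hu using artanh_eq_half_log_sub hu
  · rw [show 1 - x ^ 2 = (1 + x) * (1 - x) by ring]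
    field_simp
    ring

lemma le_artanh {x : ℝ} (hx₀ : 0 ≤ x) (hx₁ : x < 1) : x ≤ artanh x := by
  have := le_hasSum (hasSum_log_sub_log_of_abs_lt_one (abs_lt.2 ⟨by linarith, hx₁⟩)) 0
    fun k _ => by positivity
  rw [artanh_eq_half_log_sub ⟨by linarith, hx₁⟩]
  norm_num at this
  linarith

/-- The entropy of a qubit state whose Bloch vector has squared length `r`. -/
def blochEntropy (r : ℝ) : ℝ := binEnt ((1 + √r) / 2)

lemma blochEntropy_zero : blochEntropy 0 = 1 := by
  rw [blochEntropy, sqrt_zero, binEnt_eq_binEntropy_div, add_zero, one_div, binEntropy_two_inv,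
    div_self (log_pos one_lt_two).ne']

lemma blochEntropy_le_one (r : ℝ) : blochEntropy r ≤ 1 := binEnt_le_one _

lemma blochEntropy_sub_sq {a b : ℝ} (hab : a + b = 1) : blochEntropy ((a - b) ^ 2) = binEnt a := by
  rw [blochEntropy, sqrt_sq_eq_abs]
  rcases le_total b a with h | h
  · rw [abs_of_nonneg (sub_nonneg.2 h), show (1 + (a - b)) / 2 = a by linarith]
  · rw [abs_of_nonpos (sub_nonpos.2 h), show (1 + -(a - b)) / 2 = 1 - a by linarith, binEnt_one_sub]

lemma continuous_blochEntropy : Continuous blochEntropy := by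
  rw [show blochEntropy = fun r => binEntropy ((1 + √r) / 2) / log 2 from
    funext fun r => binEnt_eq_binEntropy_div _]
  fun_prop

lemma blochEntropy_antitoneOn : AntitoneOn blochEntropy (Set.Icc 0 1) := fun a _ b hb hab => by
  have hsqrt : √a ≤ √b := sqrt_le_sqrt hab
  have hb1 : √b ≤ 1 := sqrt_le_one.2 hb.2
  have ha0 := sqrt_nonneg a
  exact binEnt_antitoneOn ⟨by linarith, by linarith⟩ ⟨by linarith, by linarith⟩ (by linarith)

lemma hasDerivAt_blochEntropy {r : ℝ} (hr₀ : 0 < r) (hr₁ : r < 1) :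
    HasDerivAt blochEntropy (-(artanh √r / √r) / (2 * log 2)) r := by
  have hs₀ : 0 < √r := sqrt_pos.2 hr₀
  have hs₁ : √r < 1 := (sqrt_lt' one_pos).2 (by simpa using hr₁)
  have hinner : HasDerivAt (fun u => (1 + √u) / 2) (1 / (2 * √r) / 2) r :=
    ((hasDerivAt_sqrt hr₀.ne').const_add 1).div_const 2
  have houter := hasDerivAt_binEnt (p := (1 + √r) / 2) (by positivity) (by linarith)
  refine (houter.comp r hinner).congr_deriv ?_
  rw [artanh_eq_half_log_sub ⟨by linarith, hs₁⟩, show 1 - (1 + √r) / 2 = (1 - √r) / 2 by ring,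
    log_div (by linarith) two_ne_zero, log_div (by linarith) two_ne_zero]
  have hl2 : log 2 ≠ 0 := (log_pos one_lt_two).ne'
  field_simp
  ring

lemma antitoneOn_inv_sub_mul_artanh : AntitoneOn (fun s => (s⁻¹ - s) * artanh s) (Set.Ioo 0 1) := by
  have hderiv : ∀ s ∈ Set.Ioo (0 : ℝ) 1, HasDerivAt (fun s => (s⁻¹ - s) * artanh s)
      ((-(s ^ 2)⁻¹ - 1) * artanh s + (s⁻¹ - s) * (1 - s ^ 2)⁻¹) s := fun s hs =>
    ((hasDerivAt_inv hs.1.ne').sub (hasDerivAt_id s)).mul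
      (hasDerivAt_artanh ⟨by linarith [hs.1], hs.2⟩)
  refine antitoneOn_of_hasDerivWithinAt_nonpos (convex_Ioo 0 1)
    (fun s hs => (hderiv s hs).continuousAt.continuousWithinAt)
    (fun s hs => (hderiv s (interior_subset hs)).hasDerivWithinAt) fun s hs => ?_
  rw [interior_Ioo] at hs
  have hs₀ := hs.1
  have hsq : 0 < 1 - s ^ 2 := by nlinarith [hs.2]
  have hx := le_artanh hs₀.le hs.2
  have e : (s⁻¹ - s) * (1 - s ^ 2)⁻¹ = s⁻¹ := by field_simp
  rw [e]
  have : s⁻¹ + s ≤ ((s ^ 2)⁻¹ + 1) * artanh s := by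
    calc s⁻¹ + s = ((s ^ 2)⁻¹ + 1) * s := by field_simp
      _ ≤ _ := by gcongr
  nlinarith

lemma one_sub_mul_artanh_div_le {c s w : ℝ} (hs₀ : 0 < s) (hsw : s ≤ w) (hw₁ : w < 1)
    (hcw : 1 - w ^ 2 = (1 - c) * (1 - s ^ 2)) :
    (1 - c) * (artanh w / w) ≤ artanh s / s := by
  have hw₀ : 0 < w := hs₀.trans_le hsw
  have hχ := antitoneOn_inv_sub_mul_artanh ⟨hs₀, hsw.trans_lt hw₁⟩ ⟨hw₀, hw₁⟩ hsw
  have hs : s⁻¹ - s = (1 - s ^ 2) / s := by field_simp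
  have hw : w⁻¹ - w = (1 - c) * (1 - s ^ 2) / w := by rw [← hcw]; field_simp
  simp only [hs, hw] at hχ
  have hs₁ : 0 < 1 - s ^ 2 := by nlinarith
  refine le_of_mul_le_mul_left ?_ hs₁
  calc (1 - s ^ 2) * ((1 - c) * (artanh w / w)) = (1 - c) * (1 - s ^ 2) / w * artanh w := by ring
    _ ≤ (1 - s ^ 2) / s * artanh s := hχ
    _ = (1 - s ^ 2) * (artanh s / s) := by ring

lemma antitoneOn_blochEntropy_sub {c : ℝ} (hc₀ : 0 ≤ c) (hc₁ : c < 1) :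
    AntitoneOn (fun u => blochEntropy u - blochEntropy (c + (1 - c) * u)) (Set.Icc 0 1) := by
  have hderiv : ∀ u ∈ Set.Ioo (0 : ℝ) 1, HasDerivAt
      (fun u => blochEntropy u - blochEntropy (c + (1 - c) * u))
      (-(artanh √u / √u) / (2 * log 2) -
        -(artanh √(c + (1 - c) * u) / √(c + (1 - c) * u)) / (2 * log 2) * (1 - c)) u := by
    intro u hu
    have hv₀ : 0 < c + (1 - c) * u := by nlinarith [hu.1]
    have hv₁ : c + (1 - c) * u < 1 := by nlinarith [hu.2]
    have hlin : HasDerivAt (fun u : ℝ => c + (1 - c) * u) (1 - c) u := by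
      simpa using ((hasDerivAt_id u).const_mul (1 - c)).const_add c
    have hcomp : HasDerivAt (blochEntropy ∘ fun u => c + (1 - c) * u) _ u :=
      (hasDerivAt_blochEntropy hv₀ hv₁).comp u hlin
    exact (hasDerivAt_blochEntropy hu.1 hu.2).sub hcomp
  refine antitoneOn_of_hasDerivWithinAt_nonpos (convex_Icc 0 1)
    (continuous_blochEntropy.sub (continuous_blochEntropy.comp (by fun_prop))).continuousOn
    (fun u hu => (hderiv u (by rwa [interior_Icc] at hu)).hasDerivWithinAt) fun u hu => ?_
  rw [interior_Icc] at hu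
  have hv₁ : c + (1 - c) * u < 1 := by nlinarith [hu.2]
  have key := one_sub_mul_artanh_div_le (c := c) (w := √(c + (1 - c) * u)) (sqrt_pos.2 hu.1)
    (sqrt_le_sqrt (by nlinarith [hu.2])) ((sqrt_lt' one_pos).2 (by simpa using hv₁))
    (by rw [sq_sqrt hu.1.le, sq_sqrt (by nlinarith [hu.1])]; ring)
  have hl2 : 0 < 2 * log 2 := by positivity
  rw [div_mul_eq_mul_div, div_sub_div_same, div_nonpos_iff]
  right
  exact ⟨by linarith, hl2.le⟩

lemma blochEntropy_sub_le {c u : ℝ} (hc₀ : 0 ≤ c) (hc₁ : c ≤ 1) (hu₀ : 0 ≤ u) (hu₁ : u ≤ 1) :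
    blochEntropy u - blochEntropy (c + (1 - c) * u) ≤ 1 - blochEntropy c := by
  rcases hc₁.eq_or_lt with rfl | hc₁
  · simpa using blochEntropy_le_one u
  simpa [blochEntropy_zero] using
    antitoneOn_blochEntropy_sub hc₀ hc₁ ⟨le_rfl, zero_le_one⟩ ⟨hu₀, hu₁⟩ hu₀

lemma blochState_eq (x y z : ℝ) :
    blochState x y z = !![(1 + (z : ℂ)) / 2, ((x : ℂ) - y * Complex.I) / 2;
      ((x : ℂ) + y * Complex.I) / 2, (1 - (z : ℂ)) / 2] := by
  ext i j
  fin_cases i <;> fin_cases j <;> simp [blochState, PX, PY, PZ] <;> ring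

lemma isHermitian_blochState (x y z : ℝ) : (blochState x y z).IsHermitian := by
  rw [blochState_eq]
  ext i j
  fin_cases i <;> fin_cases j <;> simp [Complex.ext_iff]

lemma trace_blochState (x y z : ℝ) : (blochState x y z).trace = 1 := by
  rw [blochState_eq, trace_fin_two_of]
  ring

lemma det_blochState (x y z : ℝ) :
    (blochState x y z).det = ((1 - (x ^ 2 + y ^ 2 + z ^ 2)) / 4 : ℝ) := by
  rw [blochState_eq, det_fin_two_of]
  push_cast
  linear_combination (y : ℂ) ^ 2 / 4 * Complex.I_sq

lemma vN_eq_binEnt_of_trace_eq_one {A : Matrix (Fin 2) (Fin 2) ℂ} (hA : A.IsHermitian)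
    (htr : A.trace = 1) : vN A = binEnt ((1 + √(1 - 4 * A.det.re)) / 2) := by
  set e₀ := hA.eigenvalues 0
  set e₁ := hA.eigenvalues 1
  have hsum : e₀ + e₁ = 1 := by
    have := congrArg Complex.re hA.trace_eq_sum_eigenvalues
    simpa [htr, Fin.sum_univ_two, eq_comm] using this
  have hdet : A.det.re = e₀ * e₁ := by
    rw [hA.det_eq_prod_eigenvalues, Fin.prod_univ_two]
    simp [e₀, e₁]
  have hvN : vN A = -(e₀ * logb 2 e₀ + e₁ * logb 2 e₁) := by
    rw [vN, dif_pos hA, Fin.sum_univ_two]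
  rw [hvN, hdet, show 1 - 4 * (e₀ * e₁) = (e₀ - e₁) ^ 2 by
    linear_combination (-(e₀ + e₁ + 1)) * hsum, sqrt_sq_eq_abs]
  rcases le_total e₁ e₀ with h | h
  · rw [abs_of_nonneg (sub_nonneg.2 h), show (1 + (e₀ - e₁)) / 2 = e₀ by linarith, binEnt,
      show 1 - e₀ = e₁ by linarith]
    ring
  · rw [abs_of_nonpos (sub_nonpos.2 h), show (1 + -(e₀ - e₁)) / 2 = e₁ by linarith, binEnt,
      show 1 - e₁ = e₀ by linarith]
    ring

lemma vN_blochState (x y z : ℝ) : vN (blochState x y z) = blochEntropy (x ^ 2 + y ^ 2 + z ^ 2) := by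
  rw [vN_eq_binEnt_of_trace_eq_one (isHermitian_blochState x y z) (trace_blochState x y z),
    det_blochState, Complex.ofReal_re, blochEntropy]
  congr
  ring

lemma lam0_blochState {p0 p3 : ℝ} (hpos : p0 + p3 ≠ 0) (x y z : ℝ) :
    lam0 p0 p3 (blochState x y z) =
      blochState ((p0 - p3) / (p0 + p3) * x) ((p0 - p3) / (p0 + p3) * y) z := by
  have hpos' : (p0 : ℂ) + p3 ≠ 0 := by exact_mod_cast hpos
  rw [lam0, blochState_eq, blochState_eq]
  ext i j
  fin_cases i <;> fin_cases j <;> simp [PZ] <;> field_simp <;> ring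

lemma lam0c_eq_blochState {p0 p3 : ℝ} (hpos : p0 + p3 ≠ 0) (z : ℝ) :
    lam0c p0 p3 z = blochState (2 * (√(p0 * p3) / (p0 + p3)) * z) 0 ((p0 - p3) / (p0 + p3)) := by
  have hpos' : (p0 : ℂ) + p3 ≠ 0 := by exact_mod_cast hpos
  rw [lam0c, blochState_eq]
  ext i j
  fin_cases i <;> fin_cases j <;> simp <;> field_simp <;> ring

lemma vN_lam0_sub_vN_lam0c {p0 p3 : ℝ} (h0 : 0 ≤ p0) (h3 : 0 ≤ p3) (hpos : p0 + p3 ≠ 0)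
    (x y z : ℝ) :
    vN (lam0 p0 p3 (blochState x y z)) - vN (lam0c p0 p3 z) =
      blochEntropy (((p0 - p3) / (p0 + p3)) ^ 2 * (x ^ 2 + y ^ 2) + z ^ 2) -
        blochEntropy (((p0 - p3) / (p0 + p3)) ^ 2 + (1 - ((p0 - p3) / (p0 + p3)) ^ 2) * z ^ 2) := by
  rw [lam0_blochState hpos, lam0c_eq_blochState hpos, vN_blochState, vN_blochState]
  congr 2
  · ring
  · rw [mul_pow, mul_pow, div_pow, sq_sqrt (mul_nonneg h0 h3)]
    field_simp
    ring

lemma blochEntropy_sub_le_of_sq_le_one {k x y z : ℝ} (hk : k ^ 2 ≤ 1)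
    (hxyz : x ^ 2 + y ^ 2 + z ^ 2 ≤ 1) :
    blochEntropy (k ^ 2 * (x ^ 2 + y ^ 2) + z ^ 2) - blochEntropy (k ^ 2 + (1 - k ^ 2) * z ^ 2) ≤
      1 - blochEntropy (k ^ 2) := by
  have hz : z ^ 2 ≤ 1 := by nlinarith
  have hdrop := blochEntropy_antitoneOn ⟨sq_nonneg z, hz⟩ ⟨by positivity, by nlinarith⟩
    (le_add_of_nonneg_left (by positivity) : z ^ 2 ≤ k ^ 2 * (x ^ 2 + y ^ 2) + z ^ 2)
  linarith [blochEntropy_sub_le (sq_nonneg k) hk (sq_nonneg z) hz]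

/-- Coherent information of `Λ₀`: for every Bloch state, with `κ = (p₀-p₃)/(p₀+p₃)`,
`α² = p₀/(p₀+p₃)`, `β² = p₃/(p₀+p₃)`,
`S(Λ₀(ρ)) - S(Λ₀ᶜ(ρ)) = h(½(1+√(κ²(x²+y²)+z²))) - h(½(1+√((α²-β²)²+4α²β²z²)))
  ≤ 1 - h(p₀/(p₀+p₃))`,
with equality at the maximally mixed state; hence
`max_ρ [S(Λ₀(ρ)) - S(Λ₀ᶜ(ρ))] = 1 - h(p₀/(p₀+p₃))`. -/
theorem lam0_coherent_information (p0 p3 : ℝ) (h0 : 0 ≤ p0) (h3 : 0 ≤ p3)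
    (hpos : 0 < p0 + p3) :
    (∀ x y z : ℝ, x ^ 2 + y ^ 2 + z ^ 2 ≤ 1 →
        vN (lam0 p0 p3 (blochState x y z)) - vN (lam0c p0 p3 z) =
          binEnt ((1 + Real.sqrt (((p0 - p3) / (p0 + p3)) ^ 2 * (x ^ 2 + y ^ 2) + z ^ 2)) / 2) -
            binEnt ((1 + Real.sqrt ((p0 / (p0 + p3) - p3 / (p0 + p3)) ^ 2 +
              4 * (p0 / (p0 + p3)) * (p3 / (p0 + p3)) * z ^ 2)) / 2)) ∧
    (∀ x y z : ℝ, x ^ 2 + y ^ 2 + z ^ 2 ≤ 1 →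
        vN (lam0 p0 p3 (blochState x y z)) - vN (lam0c p0 p3 z) ≤
          1 - binEnt (p0 / (p0 + p3))) ∧
    vN (lam0 p0 p3 (blochState 0 0 0)) - vN (lam0c p0 p3 0) = 1 - binEnt (p0 / (p0 + p3)) ∧
    IsGreatest
      {d : ℝ | ∃ x y z : ℝ, x ^ 2 + y ^ 2 + z ^ 2 ≤ 1 ∧
        d = vN (lam0 p0 p3 (blochState x y z)) - vN (lam0c p0 p3 z)}
      (1 - binEnt (p0 / (p0 + p3))) := by
  have hκ : ((p0 - p3) / (p0 + p3)) ^ 2 ≤ 1 := by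
    rw [div_pow, div_le_one (by positivity)]
    nlinarith
  have hmax : blochEntropy (((p0 - p3) / (p0 + p3)) ^ 2) = binEnt (p0 / (p0 + p3)) := by
    rw [sub_div, blochEntropy_sub_sq (by field_simp)]
  have hbound (x y z : ℝ) (hxyz : x ^ 2 + y ^ 2 + z ^ 2 ≤ 1) :
      vN (lam0 p0 p3 (blochState x y z)) - vN (lam0c p0 p3 z) ≤ 1 - binEnt (p0 / (p0 + p3)) := by
    rw [vN_lam0_sub_vN_lam0c h0 h3 hpos.ne', ← hmax]
    exact blochEntropy_sub_le_of_sq_le_one hκ hxyz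
  have hzero : vN (lam0 p0 p3 (blochState 0 0 0)) - vN (lam0c p0 p3 0) =
      1 - binEnt (p0 / (p0 + p3)) := by
    simp [vN_lam0_sub_vN_lam0c h0 h3 hpos.ne', blochEntropy_zero, hmax]
  refine ⟨fun x y z _ => ?_, hbound, hzero, ⟨⟨0, 0, 0, by norm_num, hzero.symm⟩, ?_⟩⟩
  · have hR : ((p0 - p3) / (p0 + p3)) ^ 2 + (1 - ((p0 - p3) / (p0 + p3)) ^ 2) * z ^ 2 =
        (p0 / (p0 + p3) - p3 / (p0 + p3)) ^ 2 +
          4 * (p0 / (p0 + p3)) * (p3 / (p0 + p3)) * z ^ 2 := by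
      field_simp
      ring
    rw [vN_lam0_sub_vN_lam0c h0 h3 hpos.ne', hR]
    rfl
  · rintro d ⟨x, y, z, hxyz, rfl⟩
    exact hbound x y z hxyz

end
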